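/- arXiv:1710.01331 — 5 statements merged into one kernel-verified Lean document; each statement's English description precedes it below -/
import Mathlib

section
/- Let H be a real Hilbert space, L: H → H self-adjoint nonnegative, G: H → H self-adjoint nonpositive, all bounded linear operators. Let Δt > 0, b ∈ H with ‖b‖ arbitrary, r ∈ ℝ, and suppose φⁿ, φⁿ⁺¹, μⁿ⁺¹ ∈ H and rⁿ, rⁿ⁺¹ ∈ ℝ satisfy the first-order SAV scheme: (φⁿ⁺¹ − φⁿ)/Δt = G μⁿ⁺¹, μⁿ⁺¹ = L φⁿ⁺¹ + rⁿ⁺¹ b, and rⁿ⁺¹ − rⁿ = (1/2) ⟨b, φⁿ⁺¹ − φⁿ⟩. Then the discrete energy identity holds: [Ẽ(φⁿ⁺¹, rⁿ⁺¹) − Ẽ(φⁿ, rⁿ)] + (1/2)⟨φⁿ⁺¹ − φⁿ, L(φⁿ⁺¹ − φⁿ)⟩ + (rⁿ⁺¹ − rⁿ)² = Δt ⟨μⁿ⁺¹, G μⁿ⁺¹⟩, where Ẽ(φ, r) = (1/2)⟨φ, Lφ⟩ + r². In particular Ẽ(φⁿ⁺¹, rⁿ⁺¹) ≤ Ẽ(φⁿ,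 rⁿ). -/
open RealInnerProductSpace

/-!
Pairing the first equation of the scheme with `μⁿ⁺¹` and using the symmetry of `G` gives
`Δt ⟪μⁿ⁺¹, G μⁿ⁺¹⟫ = ⟪φⁿ⁺¹ - φⁿ, μⁿ⁺¹⟫`. Splitting `μⁿ⁺¹ = L φⁿ⁺¹ + rⁿ⁺¹ b`, the `L`-part is
rewritten by the polarization identity for the symmetric map `L`, and the `b`-part equals
`2 rⁿ⁺¹ (rⁿ⁺¹ - rⁿ)` by the third equation, i.e. `(rⁿ⁺¹)² - (rⁿ)² + (rⁿ⁺¹ - rⁿ)²`. The energy decay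
follows because `L` is nonnegative and `G` nonpositive.
-/

section

variable {H : Type*} [NormedAddCommGroup H] [InnerProductSpace ℝ H]

theorem LinearMap.IsSymmetric.inner_sub_map_self {T : H →ₗ[ℝ] H} (hT : T.IsSymmetric) (a c : H) :
    ⟪a - c, T a⟫ = (1 / 2 : ℝ) * (⟪a, T a⟫ - ⟪c, T c⟫ + ⟪a - c, T (a - c)⟫) := by
  have hcross : ⟪c, T a⟫ = ⟪a, T c⟫ := by rw [← hT, real_inner_comm]
  simp only [map_sub, inner_sub_left, inner_sub_right, hcross]
  ring

/-- The modified energy `Ẽ(φ, r)` of the scalar auxiliary variable scheme. -/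
noncomputable def savEnergy (L : H →ₗ[ℝ] H) (φ : H) (r : ℝ) : ℝ :=
  (1 / 2 : ℝ) * ⟪φ, L φ⟫ + r ^ 2

theorem savEnergy_sub_add_dissipation_eq {L G : H →ₗ[ℝ] H} (hL : L.IsSymmetric)
    (hG : G.IsSymmetric) {Δt : ℝ} {b φn φn1 μn1 : H} {rn rn1 : ℝ}
    (hφ : φn1 - φn = Δt • G μn1) (hμ : μn1 = L φn1 + rn1 • b)
    (hr : rn1 - rn = (1 / 2 : ℝ) * ⟪b, φn1 - φn⟫) :
    savEnergy L φn1 rn1 - savEnergy L φn rn + (1 / 2 : ℝ) * ⟪φn1 - φn, L (φn1 - φn)⟫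
        + (rn1 - rn) ^ 2 = Δt * ⟪μn1, G μn1⟫ := by
  have hpair : Δt * ⟪μn1, G μn1⟫ = ⟪φn1 - φn, L φn1⟫ + rn1 * ⟪b, φn1 - φn⟫ := by
    rw [← hG, ← real_inner_smul_left, ← hφ, hμ, inner_add_right, real_inner_smul_right,
      real_inner_comm b]
  have hb : ⟪b, φn1 - φn⟫ = 2 * (rn1 - rn) := by rw [hr]; ring
  rw [hpair, hL.inner_sub_map_self, hb, savEnergy, savEnergy]
  ring

end

theorem sav_first_order_discrete_energy_law_general
    {H : Type*} [NormedAddCommGroup H] [InnerProductSpace ℝ H]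
    (L G : H →L[ℝ] H)
    (hLsa : ∀ x y : H, ⟪L x, y⟫ = ⟪x, L y⟫)
    (hLpos : ∀ ψ : H, 0 ≤ ⟪ψ, L ψ⟫)
    (hGsa : ∀ x y : H, ⟪G x, y⟫ = ⟪x, G y⟫)
    (hGneg : ∀ ψ : H, ⟪ψ, G ψ⟫ ≤ 0)
    (Δt : ℝ) (hΔt : 0 < Δt) (b : H) (φn φn1 μn1 : H) (rn rn1 : ℝ)
    (hscheme1 : φn1 - φn = Δt • G μn1)
    (hscheme2 : μn1 = L φn1 + rn1 • b)
    (hscheme3 : rn1 - rn = (1 / 2 : ℝ) * ⟪b, φn1 - φn⟫) :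
    ((1 / 2 : ℝ) * ⟪φn1, L φn1⟫ + rn1 ^ 2 - ((1 / 2 : ℝ) * ⟪φn, L φn⟫ + rn ^ 2))
        + (1 / 2 : ℝ) * ⟪φn1 - φn, L (φn1 - φn)⟫ + (rn1 - rn) ^ 2
      = Δt * ⟪μn1, G μn1⟫
    ∧ (1 / 2 : ℝ) * ⟪φn1, L φn1⟫ + rn1 ^ 2 ≤ (1 / 2 : ℝ) * ⟪φn, L φn⟫ + rn ^ 2 := by
  have identity := savEnergy_sub_add_dissipation_eq (L := (L : H →ₗ[ℝ] H))
    (G := (G : H →ₗ[ℝ] H)) hLsa hGsa hscheme1 hscheme2 hscheme3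
  refine ⟨identity, ?_⟩
  have hdissipation : Δt * ⟪μn1, G μn1⟫ ≤ 0 := mul_nonpos_of_nonneg_of_nonpos hΔt.le (hGneg μn1)
  have hL_nonneg := hLpos (φn1 - φn)
  have hsq := sq_nonneg (rn1 - rn)
  unfold savEnergy at identity
  simp only [ContinuousLinearMap.coe_coe] at identity
  linarith

theorem sav_first_order_discrete_energy_law
    {H : Type*} [NormedAddCommGroup H] [InnerProductSpace ℝ H] [CompleteSpace H]
    (L G : H →L[ℝ] H)
    (hLsa : ∀ x y : H, ⟪L x, y⟫ = ⟪x, L y⟫)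
    (hLpos : ∀ ψ : H, 0 ≤ ⟪ψ, L ψ⟫)
    (hGsa : ∀ x y : H, ⟪G x, y⟫ = ⟪x, G y⟫)
    (hGneg : ∀ ψ : H, ⟪ψ, G ψ⟫ ≤ 0)
    (Δt : ℝ) (hΔt : 0 < Δt) (b : H) (φn φn1 μn1 : H) (rn rn1 : ℝ)
    (hscheme1 : φn1 - φn = Δt • G μn1)
    (hscheme2 : μn1 = L φn1 + rn1 • b)
    (hscheme3 : rn1 - rn = (1 / 2 : ℝ) * ⟪b, φn1 - φn⟫) :
    ((1 / 2 : ℝ) * ⟪φn1, L φn1⟫ + rn1 ^ 2 - ((1 / 2 : ℝ) * ⟪φn, L φn⟫ + rn ^ 2))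
        + (1 / 2 : ℝ) * ⟪φn1 - φn, L (φn1 - φn)⟫ + (rn1 - rn) ^ 2
      = Δt * ⟪μn1, G μn1⟫
    ∧ (1 / 2 : ℝ) * ⟪φn1, L φn1⟫ + rn1 ^ 2 ≤ (1 / 2 : ℝ) * ⟪φn, L φn⟫ + rn ^ 2 :=
  sav_first_order_discrete_energy_law_general L G hLsa hLpos hGsa hGneg Δt hΔt b φn φn1 μn1 rn rn1
    hscheme1 hscheme2 hscheme3
end

section
/- Let H be a real Hilbert space, L self-adjoint nonnegative, G self-adjoint nonpositive bounded linear operators on H, and b ∈ H fixed. Suppose (φⁿ⁻¹, φⁿ, φⁿ⁺¹) in H, (rⁿ⁻¹, rⁿ, rⁿ⁺¹) in ℝ, μ ∈ H, and Δt > 0 satisfy the SAV/BDF2 scheme: (3φⁿ⁺¹ − 4φⁿ + φⁿ⁻¹)/(2Δt) = Gμ, μ = Lφⁿ⁺¹ + rⁿ⁺¹ b, and 3rⁿ⁺¹ − 4rⁿ + rⁿ⁻¹ = (1/2)⟨b, 3φⁿ⁺¹ − 4φⁿ + φⁿ⁻¹⟩. Define the BDF2 modified energy Ẽ[(φ', r'),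 (φ, r)] = (1/4)(⟨φ', Lφ'⟩ + ⟨2φ' − φ, L(2φ' − φ)⟩) + (1/2)((r')² + (2r' − r)²). Then Ẽ[(φⁿ⁺¹, rⁿ⁺¹), (φⁿ, rⁿ)] − Ẽ[(φⁿ, rⁿ), (φⁿ⁻¹, rⁿ⁻¹)] + (1/4)⟨φⁿ⁺¹ − 2φⁿ + φⁿ⁻¹, L(φⁿ⁺¹ − 2φⁿ + φⁿ⁻¹)⟩ + (1/2)(rⁿ⁺¹ − 2rⁿ + rⁿ⁻¹)² = Δt ⟨μ, Gμ⟩. In particular the modified energy is non-increasing. -/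
open RealInnerProductSpace

/-!
Pairing the first equation with `μ` gives `2Δt⟪μ, Gμ⟫ = ⟪3φ² - 4φ¹ + φ⁰, μ⟫`; substituting
`μ = Lφ² + r²b`, the `b`-component is exactly what the scalar equation converts into
`2r²(3r² - 4r¹ + r⁰)`. The BDF2 telescoping identity `2⟪3a² - 4a¹ + a⁰, a²⟫ = …`, valid for every
symmetric bilinear form, applied to `⟪x, Ly⟫` and to `xy`, turns both terms into the energy
difference plus the second-difference dissipation, which is nonnegative since `L ≥ 0`.
-/

theorem LinearMap.BilinForm.IsSymm.two_mul_apply_bdf2 {R M : Type*} [CommRing R] [AddCommGroup M]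
    [Module R M] {B : LinearMap.BilinForm R M} (hB : B.IsSymm) (a₀ a₁ a₂ : M) :
    2 * B ((3 : R) • a₂ - (4 : R) • a₁ + a₀) a₂
      = B a₂ a₂ + B ((2 : R) • a₂ - a₁) ((2 : R) • a₂ - a₁)
        + B (a₂ - (2 : R) • a₁ + a₀) (a₂ - (2 : R) • a₁ + a₀)
        - B a₁ a₁ - B ((2 : R) • a₁ - a₀) ((2 : R) • a₁ - a₀) := by
  simp only [map_add, map_sub, map_smul, LinearMap.add_apply, LinearMap.sub_apply,
    LinearMap.smul_apply, smul_eq_mul]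
  rw [hB.eq a₁ a₂, hB.eq a₀ a₂, hB.eq a₀ a₁]
  ring

theorem isSymm_innerₗ_compl₂ {H : Type*} [NormedAddCommGroup H] [InnerProductSpace ℝ H]
    {L : H →L[ℝ] H} (hL : ∀ x y : H, ⟪L x, y⟫ = ⟪x, L y⟫) :
    LinearMap.BilinForm.IsSymm ((innerₗ H).compl₂ (L : H →ₗ[ℝ] H)) :=
  ⟨fun x y => by
    simp only [LinearMap.compl₂_apply, innerₗ_apply_apply, ContinuousLinearMap.coe_coe]
    rw [← hL, real_inner_comm]⟩

theorem two_mul_inner_bdf2_apply {H : Type*} [NormedAddCommGroup H] [InnerProductSpace ℝ H]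
    {L : H →L[ℝ] H} (hL : ∀ x y : H, ⟪L x, y⟫ = ⟪x, L y⟫) (a₀ a₁ a₂ : H) :
    2 * ⟪(3 : ℝ) • a₂ - (4 : ℝ) • a₁ + a₀, L a₂⟫
      = ⟪a₂, L a₂⟫ + ⟪(2 : ℝ) • a₂ - a₁, L ((2 : ℝ) • a₂ - a₁)⟫
        + ⟪a₂ - (2 : ℝ) • a₁ + a₀, L (a₂ - (2 : ℝ) • a₁ + a₀)⟫
        - ⟪a₁, L a₁⟫ - ⟪(2 : ℝ) • a₁ - a₀, L ((2 : ℝ) • a₁ - a₀)⟫ :=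
  (isSymm_innerₗ_compl₂ hL).two_mul_apply_bdf2 a₀ a₁ a₂

theorem sav_bdf2_discrete_energy_law_general
    {H : Type*} [NormedAddCommGroup H] [InnerProductSpace ℝ H]
    (L G : H →L[ℝ] H)
    (hLsa : ∀ x y : H, ⟪L x, y⟫ = ⟪x, L y⟫)
    (hLpos : ∀ ψ : H, 0 ≤ ⟪ψ, L ψ⟫)
    (hGneg : ∀ ψ : H, ⟪ψ, G ψ⟫ ≤ 0)
    (b : H) (Δt : ℝ) (hΔt : 0 < Δt)
    (φ0 φ1 φ2 μ : H) (r0 r1 r2 : ℝ)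
    (hscheme1 : (3 : ℝ) • φ2 - (4 : ℝ) • φ1 + φ0 = (2 * Δt) • G μ)
    (hscheme2 : μ = L φ2 + r2 • b)
    (hscheme3 : 3 * r2 - 4 * r1 + r0 = (1 / 2 : ℝ) * ⟪b, (3 : ℝ) • φ2 - (4 : ℝ) • φ1 + φ0⟫)
    (Etil : H × ℝ → H × ℝ → ℝ)
    (hEtil : ∀ p q : H × ℝ, Etil p q
        = (1 / 4 : ℝ) * (⟪p.1, L p.1⟫ + ⟪(2 : ℝ) • p.1 - q.1, L ((2 : ℝ) • p.1 - q.1)⟫)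
          + (1 / 2 : ℝ) * (p.2 ^ 2 + (2 * p.2 - q.2) ^ 2)) :
    Etil (φ2, r2) (φ1, r1) - Etil (φ1, r1) (φ0, r0)
        + (1 / 4 : ℝ) * ⟪φ2 - (2 : ℝ) • φ1 + φ0, L (φ2 - (2 : ℝ) • φ1 + φ0)⟫
        + (1 / 2 : ℝ) * (r2 - 2 * r1 + r0) ^ 2
      = Δt * ⟪μ, G μ⟫
    ∧ Etil (φ2, r2) (φ1, r1) ≤ Etil (φ1, r1) (φ0, r0) := by
  set D := (3 : ℝ) • φ2 - (4 : ℝ) • φ1 + φ0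
  have hμ_test : ⟪μ, D⟫ = 2 * Δt * ⟪μ, G μ⟫ := by
    rw [hscheme1, real_inner_smul_right]
  have hsav : ⟪μ, D⟫ = ⟪D, L φ2⟫ + 2 * r2 * (3 * r2 - 4 * r1 + r0) := by
    rw [hscheme2, inner_add_left, real_inner_smul_left, real_inner_comm, hscheme3]
    ring
  have hL_telescope := two_mul_inner_bdf2_apply hLsa φ0 φ1 φ2
  have energy_law : Etil (φ2, r2) (φ1, r1) - Etil (φ1, r1) (φ0, r0)
        + (1 / 4 : ℝ) * ⟪φ2 - (2 : ℝ) • φ1 + φ0, L (φ2 - (2 : ℝ) • φ1 + φ0)⟫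
        + (1 / 2 : ℝ) * (r2 - 2 * r1 + r0) ^ 2 = Δt * ⟪μ, G μ⟫ := by
    rw [hEtil, hEtil]
    linear_combination (-1 / 4 : ℝ) * hL_telescope - (1 / 2 : ℝ) * hsav + (1 / 2 : ℝ) * hμ_test
  refine ⟨energy_law, ?_⟩
  linarith [hLpos (φ2 - (2 : ℝ) • φ1 + φ0), sq_nonneg (r2 - 2 * r1 + r0),
    mul_nonpos_of_nonneg_of_nonpos hΔt.le (hGneg μ)]

theorem sav_bdf2_discrete_energy_law
    {H : Type*} [NormedAddCommGroup H] [InnerProductSpace ℝ H] [CompleteSpace H]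
    (L G : H →L[ℝ] H)
    (hLsa : ∀ x y : H, ⟪L x, y⟫ = ⟪x, L y⟫)
    (hLpos : ∀ ψ : H, 0 ≤ ⟪ψ, L ψ⟫)
    (hGsa : ∀ x y : H, ⟪G x, y⟫ = ⟪x, G y⟫)
    (hGneg : ∀ ψ : H, ⟪ψ, G ψ⟫ ≤ 0)
    (b : H) (Δt : ℝ) (hΔt : 0 < Δt)
    (φ0 φ1 φ2 μ : H) (r0 r1 r2 : ℝ)
    (hscheme1 : (3 : ℝ) • φ2 - (4 : ℝ) • φ1 + φ0 = (2 * Δt) • G μ)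
    (hscheme2 : μ = L φ2 + r2 • b)
    (hscheme3 : 3 * r2 - 4 * r1 + r0 = (1 / 2 : ℝ) * ⟪b, (3 : ℝ) • φ2 - (4 : ℝ) • φ1 + φ0⟫)
    (Etil : H × ℝ → H × ℝ → ℝ)
    (hEtil : ∀ p q : H × ℝ, Etil p q
        = (1 / 4 : ℝ) * (⟪p.1, L p.1⟫ + ⟪(2 : ℝ) • p.1 - q.1, L ((2 : ℝ) • p.1 - q.1)⟫)
          + (1 / 2 : ℝ) * (p.2 ^ 2 + (2 * p.2 - q.2) ^ 2)) :
    Etil (φ2, r2) (φ1, r1) - Etil (φ1, r1) (φ0, r0)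
        + (1 / 4 : ℝ) * ⟪φ2 - (2 : ℝ) • φ1 + φ0, L (φ2 - (2 : ℝ) • φ1 + φ0)⟫
        + (1 / 2 : ℝ) * (r2 - 2 * r1 + r0) ^ 2
      = Δt * ⟪μ, G μ⟫
    ∧ Etil (φ2, r2) (φ1, r1) ≤ Etil (φ1, r1) (φ0, r0) :=
  sav_bdf2_discrete_energy_law_general L G hLsa hLpos hGneg b Δt hΔt φ0 φ1 φ2 μ r0 r1 r2 hscheme1
    hscheme2 hscheme3 Etil hEtil
end

section
/- Let H be a real Hilbert space, G a self-adjoint negative-definite bounded linear operator on H (i.e., invertible with ⟨ψ, Gψ⟩ < 0 for ψ ≠ 0), L a self-adjoint nonnegative bounded linear operator, and Δt > 0 such that I − Δt G L is invertible. Then for any b ∈ H with b ≠ 0, the quantity γ = −⟨b, (I − Δt G L)⁻¹ G b⟩ satisfies γ = ⟨b, (−G⁻¹ + Δt L)⁻¹ b⟩ > 0. -/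
/-!
From `Ginv * (1 - Δt • G * L) = Ginv - Δt • L` one gets `T * G = -M`, i.e. `γ = ⟪b, M b⟫`.
`Ginv` is negative definite because `G` is, so `-Ginv + Δt • L` is positive definite, and then so
is its inverse `M`.
-/

open RealInnerProductSpace

theorem mul_eq_neg_of_inv_one_sub_mul {R : Type*} [Ring R] {g g' l t m : R} (hg : g' * g = 1)
    (ht : (1 - g * l) * t = 1) (hm : m * (-g' + l) = 1) : t * g = -m := by
  have hfactor : -g' + l = -g' * (1 - g * l) := by
    rw [mul_sub, mul_one, neg_mul, ← mul_assoc, hg, one_mul, sub_neg_eq_add]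
  calc t * g = m * (-g' + l) * t * g := by rw [hm, one_mul]
    _ = -(m * (g' * ((1 - g * l) * t) * g)) := by rw [hfactor]; noncomm_ring
    _ = -m := by rw [ht, mul_one, hg, mul_one]

section PositiveDefinite

variable {H : Type*} [NormedAddCommGroup H] [InnerProductSpace ℝ H]

theorem inner_map_pos_of_comp_eq_one {A B : H →L[ℝ] H} (hA : ∀ x, x ≠ 0 → 0 < ⟪x, A x⟫)
    (hAB : A ∘L B = 1) {x : H} (hx : x ≠ 0) : 0 < ⟪x, B x⟫ := by
  have hABx : A (B x) = x := by simpa using congr($hAB x)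
  have hBx : B x ≠ 0 := fun h ↦ hx (by rw [← hABx, h, map_zero])
  simpa only [hABx, real_inner_comm] using hA (B x) hBx

theorem inner_add_map_pos {A C : H →L[ℝ] H} (hA : ∀ x, x ≠ 0 → 0 < ⟪x, A x⟫)
    (hC : ∀ x, 0 ≤ ⟪x, C x⟫) {x : H} (hx : x ≠ 0) : 0 < ⟪x, (A + C) x⟫ := by
  rw [add_apply, inner_add_right]
  exact add_pos_of_pos_of_nonneg (hA x hx) (hC x)

end PositiveDefinite

theorem sav_gamma_positive_general
    {H : Type*} [NormedAddCommGroup H] [InnerProductSpace ℝ H]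
    (G L Ginv T M : H →L[ℝ] H) (Δt : ℝ) (hΔt : 0 < Δt)
    (hGneg : ∀ ψ : H, ψ ≠ 0 → ⟪ψ, G ψ⟫ < 0)
    (hLpos : ∀ ψ : H, 0 ≤ ⟪ψ, L ψ⟫)
    (hGinv1 : G ∘L Ginv = 1) (hGinv2 : Ginv ∘L G = 1)
    (hT1 : (1 - Δt • (G ∘L L)) ∘L T = 1)
    (hM1 : (-Ginv + Δt • L) ∘L M = 1) (hM2 : M ∘L (-Ginv + Δt • L) = 1)
    (b : H) (hb : b ≠ 0) :
    -⟪b, T (G b)⟫ = ⟪b, M b⟫ ∧ 0 < -⟪b, T (G b)⟫ := by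
  have hTG : T ∘L G = -M := by
    refine mul_eq_neg_of_inv_one_sub_mul (l := Δt • L) hGinv2 ?_ hM2
    rwa [ContinuousLinearMap.mul_def, ContinuousLinearMap.mul_def,
      ContinuousLinearMap.comp_smul]
  have hgamma : -⟪b, T (G b)⟫ = ⟪b, M b⟫ := by
    rw [← ContinuousLinearMap.comp_apply, hTG, neg_apply, inner_neg_right, neg_neg]
  have hnegG : ∀ x, x ≠ 0 → 0 < ⟪x, (-G) x⟫ := fun x hx ↦ by
    simpa only [neg_apply, inner_neg_right, neg_pos] using hGneg x hx
  have hnegGinv : ∀ x, x ≠ 0 → 0 < ⟪x, (-Ginv) x⟫ := fun x ↦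
    inner_map_pos_of_comp_eq_one hnegG (by rw [ContinuousLinearMap.neg_comp,
      ContinuousLinearMap.comp_neg, neg_neg, hGinv1])
  have hΔtL : ∀ x, 0 ≤ ⟪x, (Δt • L) x⟫ := fun x ↦ by
    rw [smul_apply, real_inner_smul_right]
    exact mul_nonneg hΔt.le (hLpos x)
  exact ⟨hgamma, hgamma ▸ inner_map_pos_of_comp_eq_one
    (fun x ↦ inner_add_map_pos hnegGinv hΔtL) hM1 hb⟩

theorem sav_gamma_positive
    {H : Type*} [NormedAddCommGroup H] [InnerProductSpace ℝ H] [CompleteSpace H]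
    (G L Ginv T M : H →L[ℝ] H) (Δt : ℝ) (hΔt : 0 < Δt)
    (hGsa : ∀ x y : H, ⟪G x, y⟫ = ⟪x, G y⟫)
    (hGneg : ∀ ψ : H, ψ ≠ 0 → ⟪ψ, G ψ⟫ < 0)
    (hLsa : ∀ x y : H, ⟪L x, y⟫ = ⟪x, L y⟫)
    (hLpos : ∀ ψ : H, 0 ≤ ⟪ψ, L ψ⟫)
    (hGinv1 : G ∘L Ginv = 1) (hGinv2 : Ginv ∘L G = 1)
    (hT1 : (1 - Δt • (G ∘L L)) ∘L T = 1) (hT2 : T ∘L (1 - Δt • (G ∘L L)) = 1)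
    (hM1 : (-Ginv + Δt • L) ∘L M = 1) (hM2 : M ∘L (-Ginv + Δt • L) = 1)
    (b : H) (hb : b ≠ 0) :
    -⟪b, T (G b)⟫ = ⟪b, M b⟫ ∧ 0 < -⟪b, T (G b)⟫ :=
  sav_gamma_positive_general G L Ginv T M Δt hΔt hGneg hLpos hGinv1 hGinv2 hT1 hM1 hM2 b hb
end

section
/- Let H be a real Hilbert space, G self-adjoint nonpositive, and let E = E_c − E_e with E_c, E_e convex Fréchet-differentiable functionals on H. Suppose φⁿ, φⁿ⁺¹ ∈ H and Δt > 0 satisfy the convex splitting scheme (φⁿ⁺¹ − φⁿ)/Δt = G(E_c'[φⁿ⁺¹] − E_e'[φⁿ]). If G is invertible (negative definite), then E[φⁿ⁺¹] ≤ E[φⁿ]. -/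
/-!
The convexity inequalities `Ec φⁿ⁺¹ + ⟪∇Ec φⁿ⁺¹, φⁿ - φⁿ⁺¹⟫ ≤ Ec φⁿ` and
`Ee φⁿ + ⟪∇Ee φⁿ, φⁿ⁺¹ - φⁿ⟫ ≤ Ee φⁿ⁺¹` bound the change of energy by `⟪u, φⁿ⁺¹ - φⁿ⟫`, where
`u = ∇Ec φⁿ⁺¹ - ∇Ee φⁿ`; by the scheme this is `Δt ⟪u, G u⟫ ≤ 0`.
-/

open RealInnerProductSpace

-- On the segment `t ↦ lineMap x y t` the derivative at `0` is below the secant slope over `[0, 1]`.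
theorem ConvexOn.add_fderiv_sub_le {E : Type*} [NormedAddCommGroup E] [NormedSpace ℝ E]
    {f : E → ℝ} {f' : E →L[ℝ] ℝ} {s : Set E} {x y : E}
    (hf : ConvexOn ℝ s f) (hx : x ∈ s) (hy : y ∈ s) (hf' : HasFDerivAt f f' x) :
    f x + f' (y - x) ≤ f y := by
  set L : ℝ →ᵃ[ℝ] E := AffineMap.lineMap x y
  have hL0 : L 0 = x := AffineMap.lineMap_apply_zero x y
  have hL1 : L 1 = y := AffineMap.lineMap_apply_one x y
  have hline : ConvexOn ℝ (L ⁻¹' s) (f ∘ L) := hf.comp_affineMap L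
  have hderiv : HasDerivAt (f ∘ L) (f' (y - x)) 0 :=
    (hL0 ▸ hf').comp_hasDerivAt 0 AffineMap.hasDerivAt_lineMap
  have hslope :=
    hline.le_slope_of_hasDerivAt (by simpa [hL0]) (by simpa [hL1]) zero_lt_one hderiv
  rw [slope_def_field, Function.comp_apply, Function.comp_apply, hL0, hL1, sub_zero, div_one]
    at hslope
  linarith

theorem ConvexOn.add_inner_gradient_sub_le {H : Type*} [NormedAddCommGroup H]
    [InnerProductSpace ℝ H] [CompleteSpace H] {f : H → ℝ} {g : H} {s : Set H} {x y : H}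
    (hf : ConvexOn ℝ s f) (hx : x ∈ s) (hy : y ∈ s) (hg : HasGradientAt f g x) :
    f x + ⟪g, y - x⟫ ≤ f y :=
  hf.add_fderiv_sub_le hx hy hg.hasFDerivAt

theorem ConvexOn.sub_le_sub_of_inner_splitting_gradient_nonpos {H : Type*}
    [NormedAddCommGroup H] [InnerProductSpace ℝ H] [CompleteSpace H] {Ec Ee : H → ℝ}
    {s : Set H} {gc ge φ₀ φ₁ : H} (hEc : ConvexOn ℝ s Ec) (hEe : ConvexOn ℝ s Ee)
    (hφ₀ : φ₀ ∈ s) (hφ₁ : φ₁ ∈ s)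
    (hgc : HasGradientAt Ec gc φ₁) (hge : HasGradientAt Ee ge φ₀)
    (hstep : ⟪gc - ge, φ₁ - φ₀⟫ ≤ 0) :
    Ec φ₁ - Ee φ₁ ≤ Ec φ₀ - Ee φ₀ := by
  have hc := hEc.add_inner_gradient_sub_le hφ₁ hφ₀ hgc
  have he := hEe.add_inner_gradient_sub_le hφ₀ hφ₁ hge
  have hsplit : ⟪gc - ge, φ₁ - φ₀⟫ = -⟪gc, φ₀ - φ₁⟫ - ⟪ge, φ₁ - φ₀⟫ := by
    rw [inner_sub_left, ← neg_sub φ₁ φ₀, inner_neg_right, neg_neg]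
  linarith

theorem convex_splitting_energy_stable_general
    {H : Type*} [NormedAddCommGroup H] [InnerProductSpace ℝ H] [CompleteSpace H]
    (G : H →L[ℝ] H)
    (hGneg : ∀ ψ : H, ⟪ψ, G ψ⟫ ≤ 0)
    (Ec Ee : H → ℝ) (Uc Ue : H → H)
    (hEcconv : ConvexOn ℝ Set.univ Ec) (hEeconv : ConvexOn ℝ Set.univ Ee)
    (hUc : ∀ x, HasGradientAt Ec (Uc x) x)
    (hUe : ∀ x, HasGradientAt Ee (Ue x) x)
    (Δt : ℝ) (hΔt : 0 < Δt) (φn φn1 : H)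
    (hscheme : φn1 - φn = Δt • G (Uc φn1 - Ue φn)) :
    Ec φn1 - Ee φn1 ≤ Ec φn - Ee φn := by
  refine hEcconv.sub_le_sub_of_inner_splitting_gradient_nonpos hEeconv
    trivial trivial (hUc φn1) (hUe φn) ?_
  rw [hscheme, real_inner_smul_right]
  exact mul_nonpos_of_nonneg_of_nonpos hΔt.le (hGneg _)

theorem convex_splitting_energy_stable
    {H : Type*} [NormedAddCommGroup H] [InnerProductSpace ℝ H] [CompleteSpace H]
    (G Ginv : H →L[ℝ] H)
    (hGsa : ∀ x y : H, ⟪G x, y⟫ = ⟪x, G y⟫)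
    (hGneg : ∀ ψ : H, ⟪ψ, G ψ⟫ ≤ 0)
    (hGinv1 : G ∘L Ginv = 1) (hGinv2 : Ginv ∘L G = 1)
    (Ec Ee : H → ℝ) (Uc Ue : H → H)
    (hEcconv : ConvexOn ℝ Set.univ Ec) (hEeconv : ConvexOn ℝ Set.univ Ee)
    (hUc : ∀ x, HasGradientAt Ec (Uc x) x)
    (hUe : ∀ x, HasGradientAt Ee (Ue x) x)
    (Δt : ℝ) (hΔt : 0 < Δt) (φn φn1 : H)
    (hscheme : φn1 - φn = Δt • G (Uc φn1 - Ue φn)) :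
    Ec φn1 - Ee φn1 ≤ Ec φn - Ee φn :=
  convex_splitting_energy_stable_general G hGneg Ec Ee Uc Ue hEcconv hEeconv hUc hUe Δt hΔt φn φn1
    hscheme
end

section
/- For any real symmetric traceless 3×3 matrix Q, the inequality |tr(Q³)| ≤ (1/√6) (tr(Q²))^{3/2} holds. -/
/-!
Diagonalise `Q` by the spectral theorem: with eigenvalues `a + b + c = 0`, the claim becomes
`6 (a³ + b³ + c³)² ≤ (a² + b² + c²)³`. For `a + b + c = 0` the difference of the two sides is twice
the discriminant `((a - b)(b - c)(c - a))²` of the characteristic polynomial, hence nonnegative.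
-/

open Matrix

theorem Matrix.IsHermitian.trace_pow_eq_sum_eigenvalues_pow {𝕜 n : Type*} [RCLike 𝕜] [Fintype n]
    [DecidableEq n] {A : Matrix n n 𝕜} (hA : A.IsHermitian) (k : ℕ) :
    (A ^ k).trace = ∑ i, (hA.eigenvalues i : 𝕜) ^ k := by
  conv_lhs => rw [hA.spectral_theorem, ← map_pow, Unitary.conjStarAlgAut_apply, trace_mul_cycle,
    Unitary.coe_star_mul_self, one_mul, diagonal_pow, trace_diagonal]
  simp

theorem sum_sq_pow_three_sub_six_mul_sum_cube_sq_of_add_eq_zero {a b c : ℝ} (h : a + b + c = 0) :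
    (a ^ 2 + b ^ 2 + c ^ 2) ^ 3 - 6 * (a ^ 3 + b ^ 3 + c ^ 3) ^ 2 =
      2 * ((a - b) * (b - c) * (c - a)) ^ 2 := by
  obtain rfl : c = -a - b := by linarith
  ring

theorem six_mul_sum_cube_sq_le_sum_sq_pow_three {a b c : ℝ} (h : a + b + c = 0) :
    6 * (a ^ 3 + b ^ 3 + c ^ 3) ^ 2 ≤ (a ^ 2 + b ^ 2 + c ^ 2) ^ 3 := by
  rw [← sub_nonneg, sum_sq_pow_three_sub_six_mul_sum_cube_sq_of_add_eq_zero h]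
  positivity

theorem abs_le_one_div_sqrt_mul_sqrt_pow_three {x s c : ℝ} (hs : 0 ≤ s) (hc : 0 < c)
    (h : c * x ^ 2 ≤ s ^ 3) : |x| ≤ 1 / √c * √s ^ 3 := by
  refine abs_le_of_sq_le_sq ?_ (by positivity)
  rw [mul_pow, ← pow_mul, mul_comm 3, pow_mul, div_pow, Real.sq_sqrt hc.le, Real.sq_sqrt hs,
    one_pow, one_div_mul_eq_div, le_div_iff₀' hc]
  exact h

theorem traceless_symmetric_cubic_bound
    (Q : Matrix (Fin 3) (Fin 3) ℝ) (hsymm : Qᵀ = Q) (htr : Q.trace = 0) :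
    |(Q * Q * Q).trace| ≤ (1 / Real.sqrt 6) * (Real.sqrt ((Q * Q).trace)) ^ 3 := by
  have hQ : Q.IsHermitian := isHermitian_iff_isSymm.mpr hsymm
  set e := hQ.eigenvalues
  have trace_pow (k : ℕ) : (Q ^ k).trace = e 0 ^ k + e 1 ^ k + e 2 ^ k := by
    simp [hQ.trace_pow_eq_sum_eigenvalues_pow, Fin.sum_univ_three, e]
  have he : e 0 + e 1 + e 2 = 0 := by simpa [htr] using (trace_pow 1).symm
  rw [← pow_three', ← sq, trace_pow, trace_pow]
  exact abs_le_one_div_sqrt_mul_sqrt_pow_three (by positivity) (by norm_num)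
    (six_mul_sum_cube_sq_le_sum_sq_pow_three he)
end
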